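/- arXiv:2208.12677 — 7 statements merged into one kernel-verified Lean document; each statement's English description precedes it below -/
import Mathlib

section
/- If every finite power of a topological space X is star-K-Menger, then X is star-K-Scheepers. -/
/-!
Given open covers `Uₙ` of `X`, cover each power `Xᵏ` by the boxes `V₁ × ⋯ × Vₖ` with `Vᵢ ∈ Uₙ`.
If a point `(x₁, …, xₖ)` of `Xᵏ` lies in the star of a compact `L ⊆ Xᵏ` for this box cover, then
every `xᵢ` lies in the star, for `Uₙ`, of the compact union of the coordinate projections of `L`.
So star-K-Menger for `Xᵏ` puts every set of at most `k` points inside one star, and splitting the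
sequence `(Uₙ)` into infinitely many infinite subsequences, one for each `k`, yields an ω-cover.
-/

open Set

/-- Star of a set `A` with respect to a family `P`: `St(A,P) = ⋃{B ∈ P : A ∩ B ≠ ∅}`. -/
def st {X : Type*} (A : Set X) (P : Set (Set X)) : Set X :=
  ⋃₀ {B | B ∈ P ∧ (A ∩ B).Nonempty}

/-- `U` is an open cover of the space. -/
def IsOpenCover {X : Type*} [TopologicalSpace X] (U : Set (Set X)) : Prop :=
  (∀ V ∈ U, IsOpen V) ∧ ⋃₀ U = Set.univ

/-- An ω-cover: an open cover such that every finite subset lies in some member. -/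
def IsOmegaCover {X : Type*} [TopologicalSpace X] (U : Set (Set X)) : Prop :=
  IsOpenCover U ∧ ∀ F : Set X, F.Finite → ∃ V ∈ U, F ⊆ V

/-- The star-K-Scheepers property. -/
def StarKScheepers (X : Type*) [TopologicalSpace X] : Prop :=
  ∀ U : ℕ → Set (Set X), (∀ n, IsOpenCover (U n)) →
    ∃ K : ℕ → Set X, (∀ n, IsCompact (K n)) ∧
      IsOmegaCover {S | ∃ n, S = st (K n) (U n)}

/-- The star-K-Menger property. -/
def StarKMenger (X : Type*) [TopologicalSpace X] : Prop :=
  ∀ U : ℕ → Set (Set X), (∀ n, IsOpenCover (U n)) →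
    ∃ K : ℕ → Set X, (∀ n, IsCompact (K n)) ∧
      IsOpenCover {S | ∃ n, S = st (K n) (U n)}

section

variable {X : Type*}

def piCover (ι : Type*) (U : Set (Set X)) : Set (Set (ι → X)) :=
  univ.pi '' univ.pi fun _ => U

theorem isOpen_st [TopologicalSpace X] (A : Set X) {P : Set (Set X)} (hP : ∀ B ∈ P, IsOpen B) :
    IsOpen (st A P) :=
  isOpen_sUnion fun B hB => hP B hB.1

theorem IsOpenCover.mem_sUnion [TopologicalSpace X] {U : Set (Set X)} (hU : IsOpenCover U)
    (x : X) : x ∈ ⋃₀ U :=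
  hU.2 ▸ mem_univ x

theorem IsOpenCover.piCover [TopologicalSpace X] {ι : Type*} [Finite ι] {U : Set (Set X)}
    (hU : IsOpenCover U) : IsOpenCover (piCover ι U) := by
  refine ⟨?_, eq_univ_of_forall fun v => ?_⟩
  · rintro _ ⟨f, hf, rfl⟩
    exact isOpen_set_pi finite_univ fun j _ => hU.1 _ (hf j trivial)
  · choose f hfU hvf using fun j => hU.mem_sUnion (v j)
    exact ⟨univ.pi f, ⟨f, fun j _ => hfU j, rfl⟩, fun j _ => hvf j⟩

theorem range_subset_st_of_mem_st_piCover {ι : Type*} {U : Set (Set X)} {L : Set (ι → X)}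
    {v : ι → X} (hv : v ∈ st L (piCover ι U)) :
    range v ⊆ st (⋃ j, (fun w => w j) '' L) U := by
  obtain ⟨_, ⟨⟨f, hfU, rfl⟩, w, hwL, hwf⟩, hvf⟩ := hv
  rintro _ ⟨j, rfl⟩
  exact ⟨f j, ⟨hfU j trivial, w j, mem_iUnion.2 ⟨j, w, hwL, rfl⟩, hwf j trivial⟩, hvf j trivial⟩

theorem isOmegaCover_of_forall_finite [TopologicalSpace X] {V : Set (Set X)}
    (hV : ∀ S ∈ V, IsOpen S) (hfin : ∀ F : Set X, F.Finite → ∃ S ∈ V, F ⊆ S) :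
    IsOmegaCover V := by
  refine ⟨⟨hV, eq_univ_of_forall fun x => ?_⟩, hfin⟩
  obtain ⟨S, hS, hxS⟩ := hfin {x} (finite_singleton x)
  exact ⟨S, hS, hxS rfl⟩

theorem StarKMenger.exists_isCompact_range_subset_st [TopologicalSpace X] {ι : Type*} [Finite ι]
    (h : StarKMenger (ι → X)) {U : ℕ → Set (Set X)} (hU : ∀ n, IsOpenCover (U n)) :
    ∃ K : ℕ → Set X, (∀ n, IsCompact (K n)) ∧ ∀ v : ι → X, ∃ n, range v ⊆ st (K n) (U n) := by
  obtain ⟨L, hL, hLcov⟩ := h (fun n => piCover ι (U n)) fun n => (hU n).piCover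
  refine ⟨fun n => ⋃ j, (fun w => w j) '' L n,
    fun n => isCompact_iUnion fun j => (hL n).image (continuous_apply j), fun v => ?_⟩
  obtain ⟨_, ⟨n, rfl⟩, hv⟩ := hLcov.mem_sUnion v
  exact ⟨n, range_subset_st_of_mem_st_piCover hv⟩

end

/-- If every finite power of `X` is star-K-Menger, then `X` is star-K-Scheepers. -/
theorem every_finite_power_starKMenger_implies_starKScheepers
    {X : Type*} [TopologicalSpace X]
    (h : ∀ k : ℕ, StarKMenger (Fin k → X)) : StarKScheepers X := by
  intro U hU
  -- the `k`-th power handles the subsequence `U (Nat.pair k m)`, `m ∈ ℕ`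
  choose K hK hKst using fun k =>
    (h k).exists_isCompact_range_subset_st fun m => hU (Nat.pair k m)
  refine ⟨fun n => K n.unpair.1 n.unpair.2, fun n => hK _ _,
    isOmegaCover_of_forall_finite (fun _ ⟨n, hn⟩ => hn ▸ isOpen_st _ (hU n).1) fun F hF => ?_⟩
  obtain ⟨k, e, rfl⟩ := hF.fin_embedding
  obtain ⟨m, hm⟩ := hKst k e
  exact ⟨_, ⟨Nat.pair k m, rfl⟩, by simpa only [Nat.unpair_pair] using hm⟩
end

section
/- If X = ⋃_{k∈ℕ} X_k where X_k ⊆ X_{k+1} for all k and each subspace X_k is star-K-Scheepers, then X is star-K-Scheepers. -/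
open Set

/-- A countable increasing union of star-K-Scheepers subspaces is star-K-Scheepers. -/
theorem starKScheepers_increasing_union {X : Type*} [TopologicalSpace X]
    (Xk : ℕ → Set X) (hmono : ∀ k, Xk k ⊆ Xk (k + 1))
    (hcover : ⋃ k, Xk k = Set.univ)
    (h : ∀ k, StarKScheepers (Xk k)) : StarKScheepers X := by
  have mono : Monotone Xk := monotone_nat_of_le_succ hmono
  intro U hU
  let e : ℕ ≃ ℕ × ℕ := (Denumerable.eqv (ℕ × ℕ)).symm
  -- restricted covers on each subspace
  let W : ∀ k : ℕ, ℕ → Set (Set ↥(Xk k)) := fun k n =>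
    (fun u => (Subtype.val ⁻¹' u : Set ↥(Xk k))) '' (U (e.symm (k, n)))
  have hW : ∀ k n, IsOpenCover (W k n) := by
    intro k n
    constructor
    · rintro v ⟨u, hu, rfl⟩
      exact ((hU _).1 u hu).preimage continuous_subtype_val
    · ext x
      simp only [mem_univ, iff_true]
      have hx : (x : X) ∈ ⋃₀ U (e.symm (k, n)) := by rw [(hU _).2]; trivial
      obtain ⟨u, hu, hxu⟩ := hx
      exact ⟨_, ⟨u, hu, rfl⟩, hxu⟩
  have H : ∀ k, ∃ K' : ℕ → Set ↥(Xk k), (∀ n, IsCompact (K' n)) ∧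
      IsOmegaCover {S | ∃ n, S = st (K' n) (W k n)} := fun k => h k (W k) (hW k)
  choose K' hKc hKo using H
  refine ⟨fun m => Subtype.val '' K' (e m).1 (e m).2,
    fun m => ((hKc _ _).image continuous_subtype_val), ?_⟩
  have main : ∀ F : Set X, F.Finite →
      ∃ m, F ⊆ st (Subtype.val '' K' (e m).1 (e m).2) (U m) := by
    intro F hF
    obtain ⟨k, hFk⟩ : ∃ k, F ⊆ Xk k := by
      refine Set.Finite.induction_on (motive := fun s _ => ∃ k, s ⊆ Xk k) F hF ⟨0, by simp⟩ ?_
      rintro a s _ _ ⟨k, hk⟩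
      have ha : a ∈ ⋃ k, Xk k := by rw [hcover]; trivial
      obtain ⟨k', hk'⟩ := mem_iUnion.mp ha
      exact ⟨max k' k, insert_subset (mono (le_max_left _ _) hk')
        (hk.trans (mono (le_max_right _ _)))⟩
    have hF' : ((Subtype.val ⁻¹' F) : Set ↥(Xk k)).Finite :=
      hF.preimage (Subtype.val_injective.injOn)
    obtain ⟨V, ⟨n, rfl⟩, hFV⟩ := (hKo k).2 _ hF'
    refine ⟨e.symm (k, n), ?_⟩
    intro x hxF
    have hxk : x ∈ Xk k := hFk hxF
    have hx' : (⟨x, hxk⟩ : ↥(Xk k)) ∈ st (K' k n) (W k n) := hFV hxF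
    obtain ⟨B, ⟨hBW, hBne⟩, hxB⟩ := hx'
    obtain ⟨u, hu, rfl⟩ := hBW
    obtain ⟨y, hyK, hyu⟩ := hBne
    have hpair : e (e.symm (k, n)) = (k, n) := e.apply_symm_apply _
    rw [hpair]
    exact ⟨u, ⟨hu, ⟨y.val, mem_image_of_mem _ hyK, hyu⟩⟩, hxB⟩
  refine ⟨⟨?_, ?_⟩, ?_⟩
  · rintro S ⟨m, rfl⟩
    exact isOpen_sUnion fun B hB => (hU m).1 B hB.1
  · ext x
    simp only [mem_univ, iff_true]
    obtain ⟨m, hm⟩ := main {x} (finite_singleton x)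
    exact ⟨_, ⟨m, rfl⟩, hm rfl⟩
  · intro F hF
    obtain ⟨m, hm⟩ := main F hF
    exact ⟨_, ⟨m, rfl⟩, hm⟩
end

section
/- If X is a T1 space such that the Alexandroff duplicate AD(X) is star-Lindelöf, then the extent of X is countable; that is, every closed discrete subset of X is countable. -/
/-! In a star-Lindelöf space every closed set `A` of isolated points is countable: in the open
cover by `Aᶜ` and the singletons `{a}`, `a ∈ A`, the only member containing `a` is `{a}`, so `a`
lies in the star of `⋃ V` only if `{a} ∈ V`. For `D ⊆ X` closed and discrete, `D × {true}` is
such a set in `AD(X)`: its points are isolated, and its complement is open because each `x ∈ D`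
has an open `U` with `U ∩ D = {x}`, and the basic neighbourhood of `(x, false)` built from `U`
omits `(x, true)`. -/

open Set

/-- The topology of the Alexandroff duplicate `AD(X) = X × Bool`: points `(x, true)` are
isolated, and basic neighbourhoods of `(x, false)` are
`(U ×ˢ univ) \ {(x, true)}` for `U` an open neighbourhood of `x`. -/
def ADTopology (X : Type*) [TopologicalSpace X] : TopologicalSpace (X × Bool) where
  IsOpen S := ∀ x : X, (x, false) ∈ S →
    ∃ U : Set X, IsOpen U ∧ x ∈ U ∧ (U ×ˢ (Set.univ : Set Bool)) \ {(x, true)} ⊆ S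
  isOpen_univ := fun x _ =>
    ⟨Set.univ, isOpen_univ, trivial, fun _ _ => trivial⟩
  isOpen_inter := fun s t hs ht x hx => by
    obtain ⟨U, hU, hxU, hUs⟩ := hs x hx.1
    obtain ⟨V, hV, hxV, hVt⟩ := ht x hx.2
    refine ⟨U ∩ V, hU.inter hV, ⟨hxU, hxV⟩, fun p hp => ?_⟩
    exact ⟨hUs ⟨⟨hp.1.1.1, hp.1.2⟩, hp.2⟩, hVt ⟨⟨hp.1.1.2, hp.1.2⟩, hp.2⟩⟩
  isOpen_sUnion := fun 𝒮 h x hx => by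
    obtain ⟨t, ht𝒮, hxt⟩ := hx
    obtain ⟨U, hU, hxU, hUt⟩ := h t ht𝒮 x hxt
    exact ⟨U, hU, hxU, fun p hp => ⟨t, ht𝒮, hUt hp⟩⟩

/-- The star-Lindelöf property. -/
def StarLindelof (X : Type*) [TopologicalSpace X] : Prop :=
  ∀ U : Set (Set X), IsOpenCover U →
    ∃ V ⊆ U, V.Countable ∧ st (⋃₀ V) U = Set.univ

open Topology

theorem StarLindelof.countable_of_isClosed_of_isOpen_singleton {Y : Type*} [TopologicalSpace Y]
    (hY : StarLindelof Y) {A : Set Y} (hA : IsClosed A) (hA_iso : ∀ a ∈ A, IsOpen {a}) :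
    A.Countable := by
  set 𝒰 : Set (Set Y) := insert Aᶜ ((fun a => {a}) '' A)
  have h𝒰 : IsOpenCover 𝒰 := by
    refine ⟨?_, eq_univ_of_forall fun y => ?_⟩
    · rintro _ (rfl | ⟨a, ha, rfl⟩)
      exacts [hA.isOpen_compl, hA_iso a ha]
    · by_cases hy : y ∈ A
      exacts [⟨{y}, Or.inr ⟨y, hy, rfl⟩, rfl⟩, ⟨Aᶜ, Or.inl rfl, hy⟩]
  have eq_singleton : ∀ a ∈ A, ∀ B ∈ 𝒰, a ∈ B → B = {a} := by
    rintro a ha _ (rfl | ⟨b, -, rfl⟩) hab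
    · exact absurd ha hab
    · rw [mem_singleton_iff.1 hab]
  obtain ⟨V, hV𝒰, hV, hVst⟩ := hY 𝒰 h𝒰
  have hAV : (fun a => ({a} : Set Y)) '' A ⊆ V := by
    rintro _ ⟨a, ha, rfl⟩
    show {a} ∈ V
    obtain ⟨B, ⟨hB𝒰, b, ⟨C, hCV, hbC⟩, hbB⟩, haB⟩ : a ∈ st (⋃₀ V) 𝒰 := hVst ▸ mem_univ a
    rw [eq_singleton a ha B hB𝒰 haB, mem_singleton_iff] at hbB
    subst hbB
    exact eq_singleton b ha C (hV𝒰 hCV) hbC ▸ hCV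
  exact countable_of_injective_of_countable_image singleton_injective.injOn (hV.mono hAV)

namespace ADTopology

variable {X : Type*} [TopologicalSpace X]

theorem isOpen_singleton_true (x : X) : IsOpen[ADTopology X] {(x, true)} :=
  fun _ hy => absurd (Prod.ext_iff.1 hy).2 Bool.false_ne_true

theorem isClosed_prod_true {D : Set X} (hD : IsClosed D) (hD_disc : IsDiscrete D) :
    IsClosed[ADTopology X] (D ×ˢ {true}) := by
  refine (@isOpen_compl_iff _ _ (ADTopology X)).mp fun x _ => ?_
  by_cases hx : x ∈ D
  · obtain ⟨U, hU, hUD⟩ := isOpen_inter_eq_singleton_of_mem_discrete hD_disc hx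
    have hxU : x ∈ U ∩ D := hUD ▸ rfl
    refine ⟨U, hU, hxU.1, ?_⟩
    rintro ⟨y, b⟩ ⟨⟨hyU, -⟩, hne⟩ ⟨hyD, rfl⟩
    obtain rfl : y = x := hUD.subset ⟨hyU, hyD⟩
    exact hne rfl
  · exact ⟨Dᶜ, hD.isOpen_compl, hx, fun p hp hpD => hp.1.1 hpD.1⟩

end ADTopology

theorem countable_extent_of_AD_starLindelof_general {X : Type*} [TopologicalSpace X]
    (h : @StarLindelof (X × Bool) (ADTopology X)) :
    ∀ D : Set X, IsClosed D → DiscreteTopology D → D.Countable := by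
  intro D hD hD_disc
  have hD_true : (D ×ˢ {true}).Countable :=
    @StarLindelof.countable_of_isClosed_of_isOpen_singleton _ (ADTopology X) h _
      (ADTopology.isClosed_prod_true hD (isDiscrete_iff_discreteTopology.mpr hD_disc))
      (by rintro ⟨x, _⟩ ⟨-, rfl⟩; exact ADTopology.isOpen_singleton_true x)
  exact fst_image_prod D (singleton_nonempty true) ▸ hD_true.image Prod.fst

/-- If `X` is `T1` and `AD(X)` is star-Lindelöf, then every closed discrete subset of
`X` is countable (the extent of `X` is countable). -/
theorem countable_extent_of_AD_starLindelof {X : Type*} [TopologicalSpace X] [T1Space X]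
    (h : @StarLindelof (X × Bool) (ADTopology X)) :
    ∀ D : Set X, IsClosed D → DiscreteTopology D → D.Countable :=
  countable_extent_of_AD_starLindelof_general h
end

section
/- Every paracompact Hausdorff star-K-Scheepers space has the Scheepers property. -/
/-!
Refine each cover `U n` to a locally finite open cover `W n`, each member inside a member of `U n`,
and apply the star-K-Scheepers property to `(W n)`. A compact `K n` meets only finitely many members
of `W n`, so `St(K n, W n)` lies in the union of finitely many members `V n` of `U n`; enlarging the
members of the ω-cover `{St(K n, W n)}` to the open sets `⋃ V n` keeps it an ω-cover.
-/

open Set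

/-- The Scheepers property. -/
def Scheepers (X : Type*) [TopologicalSpace X] : Prop :=
  ∀ U : ℕ → Set (Set X), (∀ n, IsOpenCover (U n)) →
    ∃ V : ℕ → Set (Set X), (∀ n, (V n).Finite ∧ V n ⊆ U n) ∧
      (IsOmegaCover {S | ∃ n, S = ⋃₀ (V n)} ∨ ∃ n, ⋃₀ (V n) = Set.univ)

section

variable {X : Type*} [TopologicalSpace X]

theorem st_range_subset_sUnion_finite {ι : Type*} {v u : ι → Set X} (hv : LocallyFinite v)
    (hvu : ∀ i, v i ⊆ u i) {K : Set X} (hK : IsCompact K) :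
    ∃ V ⊆ range u, V.Finite ∧ st K (range v) ⊆ ⋃₀ V := by
  refine ⟨u '' {i | (v i ∩ K).Nonempty}, image_subset_range _ _,
    (hv.finite_nonempty_inter_compact hK).image u, ?_⟩
  rintro x ⟨_, ⟨⟨i, rfl⟩, hKi⟩, hx⟩
  exact ⟨u i, mem_image_of_mem u (by rwa [inter_comm] at hKi), hvu i hx⟩

theorem IsOpenCover.exists_refinement_st_subset_sUnion_finite [ParacompactSpace X]
    {U : Set (Set X)} (hU : IsOpenCover U) :
    ∃ W, IsOpenCover W ∧ ∀ K, IsCompact K → ∃ V ⊆ U, V.Finite ∧ st K W ⊆ ⋃₀ V := by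
  obtain ⟨v, hvo, hvc, hvlf, hvu⟩ := precise_refinement ((↑) : U → Set X)
    (fun i => hU.1 i i.2) (by rw [← sUnion_eq_iUnion, hU.2])
  refine ⟨range v, ⟨forall_mem_range.2 hvo, by rwa [sUnion_range]⟩, fun K hK => ?_⟩
  obtain ⟨V, hVU, hVfin, hst⟩ := st_range_subset_sUnion_finite hvlf hvu hK
  exact ⟨V, hVU.trans (by rw [Subtype.range_coe]), hVfin, hst⟩

theorem IsOmegaCover.mono_of_isOpen {ι : Type*} {s t : ι → Set X}
    (hs : IsOmegaCover {S | ∃ i, S = s i}) (hst : ∀ i, s i ⊆ t i) (ht : ∀ i, IsOpen (t i)) :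
    IsOmegaCover {S | ∃ i, S = t i} := by
  refine ⟨⟨by rintro _ ⟨i, rfl⟩; exact ht i, eq_univ_of_univ_subset fun x _ => ?_⟩,
    fun F hF => ?_⟩
  · obtain ⟨_, ⟨i, rfl⟩, hx⟩ := hs.1.2.symm ▸ mem_univ x
    exact ⟨t i, ⟨i, rfl⟩, hst i hx⟩
  · obtain ⟨_, ⟨i, rfl⟩, hFs⟩ := hs.2 F hF
    exact ⟨t i, ⟨i, rfl⟩, hFs.trans (hst i)⟩

end

theorem paracompact_starKScheepers_implies_scheepers_general {X : Type*} [TopologicalSpace X]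
    [ParacompactSpace X] (h : StarKScheepers X) : Scheepers X := by
  intro U hU
  choose W hW hWst using fun n => (hU n).exists_refinement_st_subset_sUnion_finite
  obtain ⟨K, hK, homega⟩ := h W hW
  choose V hVU hVfin hst using fun n => hWst n (K n) (hK n)
  refine ⟨V, fun n => ⟨hVfin n, hVU n⟩, Or.inl ?_⟩
  exact homega.mono_of_isOpen hst fun n => isOpen_sUnion fun B hB => (hU n).1 B (hVU n hB)

/-- Every paracompact Hausdorff star-K-Scheepers space is Scheepers. -/
theorem paracompact_starKScheepers_implies_scheepers {X : Type*} [TopologicalSpace X]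
    [T2Space X] [ParacompactSpace X] (h : StarKScheepers X) : Scheepers X :=
  paracompact_starKScheepers_implies_scheepers_general h
end

section
/- Let P = {x_α : α < 𝔠} and Q = {y_n : n ∈ ℕ}, Y = P × Q, and X = Y ∪ P ∪ {p} topologized so that points of Y are isolated, basic neighbourhoods of x_α are U_{x_α}(n) = {x_α} ∪ {(x_α,y_m) : m > n}, and basic neighbourhoods of p are U_p(A) = {p} ∪ {(x_α,y_n) : x_α ∈ P∖A, n ∈ ℕ} for countable A ⊆ P. Then X is not star-K-Scheepers. -/
open Set

/-- The space of Example 3.5: points of `α × ℕ` (= `Y`) are isolated, a point `a : α`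
(= `x_a ∈ P`) has basic neighbourhoods `{x_a} ∪ {(x_a, y_m) : m > n}`, and the extra
point `p` has basic neighbourhoods `{p} ∪ {(x_a, y_n) : x_a ∉ A, n ∈ ℕ}` for countable
`A ⊆ α`. -/
def ExampleTopology (α : Type*) : TopologicalSpace ((α × ℕ) ⊕ (α ⊕ Unit)) where
  IsOpen S :=
    (∀ a : α, Sum.inr (Sum.inl a) ∈ S → ∃ n : ℕ, ∀ m > n, Sum.inl (a, m) ∈ S) ∧
    (Sum.inr (Sum.inr ()) ∈ S → ∃ A : Set α, A.Countable ∧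
      ∀ a ∉ A, ∀ n : ℕ, Sum.inl (a, n) ∈ S)
  isOpen_univ :=
    ⟨fun _ _ => ⟨0, fun _ _ => trivial⟩,
     fun _ => ⟨∅, Set.countable_empty, fun _ _ _ => trivial⟩⟩
  isOpen_inter := fun s t hs ht => by
    refine ⟨fun a ha => ?_, fun hp => ?_⟩
    · obtain ⟨n, hn⟩ := hs.1 a ha.1
      obtain ⟨n', hn'⟩ := ht.1 a ha.2
      exact ⟨max n n', fun m hm =>
        ⟨hn m (lt_of_le_of_lt (le_max_left _ _) hm),
         hn' m (lt_of_le_of_lt (le_max_right _ _) hm)⟩⟩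
    · obtain ⟨A, hA, h1⟩ := hs.2 hp.1
      obtain ⟨A', hA', h2⟩ := ht.2 hp.2
      exact ⟨A ∪ A', hA.union hA', fun a haA n =>
        ⟨h1 a (fun hh => haA (Or.inl hh)) n, h2 a (fun hh => haA (Or.inr hh)) n⟩⟩
  isOpen_sUnion := fun 𝒮 h => by
    refine ⟨fun a ha => ?_, fun hp => ?_⟩
    · obtain ⟨t, ht, hat⟩ := ha
      obtain ⟨n, hn⟩ := (h t ht).1 a hat
      exact ⟨n, fun m hm => ⟨t, ht, hn m hm⟩⟩
    · obtain ⟨t, ht, hpt⟩ := hp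
      obtain ⟨A, hA, h1⟩ := (h t ht).2 hpt
      exact ⟨A, hA, fun a haA n => ⟨t, ht, h1 a haA n⟩⟩

/-!
Each `U_α` is open and they are pairwise disjoint, so a compact set `K` meets only finitely many
of them: choosing a point of `K ∩ U_{α_i}` for infinitely many distinct `α_i` yields a locally
finite family of singletons (near `p`, the neighbourhood `U_p({α_i : i ∈ ℕ})` misses all of them),
and a compact set meets only finitely many members of a locally finite family. Hence for compact
`K_n` the stars `St(K_n, 𝒰)` of the cover `𝒰 = {U_α} ∪ {U_p(∅)}` contain `x_α` for only
countably many `α`, so they do not even cover `P`.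
-/

open Topology

namespace ExampleSpace

attribute [local instance] ExampleTopology

variable {α : Type*}

/-- The set `U_α` of the paper. -/
def fiber (a : α) : Set ((α × ℕ) ⊕ (α ⊕ Unit)) :=
  insert (.inr (.inl a)) (Sum.inl '' (Prod.fst ⁻¹' {a}))

/-- The set `U_p(A)` of the paper. -/
def nbhdP (A : Set α) : Set ((α × ℕ) ⊕ (α ⊕ Unit)) :=
  insert (.inr (.inr ())) (Sum.inl '' (Prod.fst ⁻¹' Aᶜ))

def basicCover : Set (Set ((α × ℕ) ⊕ (α ⊕ Unit))) :=
  insert (nbhdP ∅) (range fiber)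

@[simp] lemma inl_mem_fiber {a b : α} {n : ℕ} : .inl (b, n) ∈ fiber a ↔ b = a := by
  simp [fiber]

@[simp] lemma inr_inl_mem_fiber {a b : α} : .inr (.inl b) ∈ fiber a ↔ b = a := by
  simp [fiber]

@[simp] lemma inr_inr_notMem_fiber {a : α} {u : Unit} : .inr (.inr u) ∉ fiber a := by
  simp [fiber]

@[simp] lemma inl_mem_nbhdP {A : Set α} {b : α} {n : ℕ} :
    .inl (b, n) ∈ nbhdP A ↔ b ∉ A := by
  simp [nbhdP]

@[simp] lemma inr_inl_notMem_nbhdP {A : Set α} {b : α} : .inr (.inl b) ∉ nbhdP A := by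
  simp [nbhdP]

@[simp] lemma inr_inr_mem_nbhdP {A : Set α} {u : Unit} : .inr (.inr u) ∈ nbhdP A := by
  simp [nbhdP]

lemma isOpen_fiber (a : α) : IsOpen (fiber a) :=
  ⟨fun b hb => ⟨0, fun m _ => by simpa using hb⟩, fun hp => by simp at hp⟩

lemma isOpen_nbhdP {A : Set α} (hA : A.Countable) : IsOpen (nbhdP A) :=
  ⟨fun b hb => by simp at hb, fun _ => ⟨A, hA, fun a ha n => by simpa using ha⟩⟩

lemma isOpenCover_basicCover : IsOpenCover (basicCover : Set (Set ((α × ℕ) ⊕ (α ⊕ Unit)))) := by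
  refine ⟨?_, eq_univ_of_forall fun z => ?_⟩
  · rintro V (rfl | ⟨a, rfl⟩)
    exacts [isOpen_nbhdP countable_empty, isOpen_fiber a]
  · rcases z with ⟨a, n⟩ | a | u
    · exact ⟨fiber a, .inr ⟨a, rfl⟩, by simp⟩
    · exact ⟨fiber a, .inr ⟨a, rfl⟩, by simp⟩
    · exact ⟨nbhdP ∅, .inl rfl, by simp⟩

lemma eq_of_mem_fiber {a b : α} {z : (α × ℕ) ⊕ (α ⊕ Unit)} (ha : z ∈ fiber a)
    (hb : z ∈ fiber b) : a = b := by
  rcases z with ⟨c, n⟩ | c | u <;> simp_all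

lemma disjoint_fiber_nbhdP {a : α} {A : Set α} (ha : a ∈ A) :
    Disjoint (fiber a) (nbhdP A) := by
  refine disjoint_left.2 fun z hz hzA => ?_
  rcases z with ⟨c, n⟩ | c | u <;> simp_all

lemma locallyFinite_singleton_of_mem_fiber {ι : Type*} [Countable ι] {a : ι → α}
    (ha : Function.Injective a) {z : ι → (α × ℕ) ⊕ (α ⊕ Unit)}
    (hz : ∀ i, z i ∈ fiber (a i)) :
    LocallyFinite fun i => ({z i} : Set _) := by
  have near_fiber : ∀ b, ∀ x ∈ fiber b, ∃ t ∈ 𝓝 x, {i | ({z i} ∩ t).Nonempty}.Finite := by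
    refine fun b x hx => ⟨fiber b, (isOpen_fiber b).mem_nhds hx, ?_⟩
    refine ((subsingleton_singleton (a := b)).preimage ha).finite.subset fun i hi => ?_
    exact eq_of_mem_fiber (hz i) (singleton_inter_nonempty.1 hi)
  rintro (⟨b, n⟩ | b | u)
  · exact near_fiber b _ (by simp)
  · exact near_fiber b _ (by simp)
  · refine ⟨nbhdP (range a), (isOpen_nbhdP (countable_range a)).mem_nhds (by simp),
      finite_empty.subset fun i hi => ?_⟩
    exact disjoint_left.1 (disjoint_fiber_nbhdP (mem_range_self i)) (hz i)
      (singleton_inter_nonempty.1 hi)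

lemma finite_setOf_inter_fiber_nonempty {K : Set ((α × ℕ) ⊕ (α ⊕ Unit))} (hK : IsCompact K) :
    {a | (K ∩ fiber a).Nonempty}.Finite := by
  by_contra h
  let e := Set.Infinite.natEmbedding _ h
  choose z hz using fun i => (e i).2
  have hlf := locallyFinite_singleton_of_mem_fiber (Subtype.val_injective.comp e.injective)
    fun i => (hz i).2
  refine infinite_univ ((hlf.finite_nonempty_inter_compact hK).subset fun i _ => ?_)
  exact singleton_inter_nonempty.2 (hz i).1

lemma inter_fiber_nonempty_of_mem_st {K : Set ((α × ℕ) ⊕ (α ⊕ Unit))} {a : α}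
    (h : .inr (.inl a) ∈ st K basicCover) : (K ∩ fiber a).Nonempty := by
  obtain ⟨B, ⟨rfl | ⟨b, rfl⟩, hKB⟩, haB⟩ := h
  · simp at haB
  · rwa [← inr_inl_mem_fiber.1 haB] at hKB

end ExampleSpace

open ExampleSpace

/-- The space `X = Y ∪ P ∪ {p}` of Example 3.5 (with `|P| = 𝔠`) is not
star-K-Scheepers. -/
theorem example_not_starKScheepers {α : Type*}
    (hα : Cardinal.mk α = Cardinal.continuum) :
    ¬ @StarKScheepers ((α × ℕ) ⊕ (α ⊕ Unit)) (ExampleTopology α) := by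
  intro H
  obtain ⟨K, hK, hω⟩ := H (fun _ => basicCover) fun _ => isOpenCover_basicCover
  have hcount : (⋃ n, {a | (K n ∩ fiber a).Nonempty}).Countable :=
    countable_iUnion fun n => (finite_setOf_inter_fiber_nonempty (hK n)).countable
  have huncount : ¬ Countable α := by
    rw [← Cardinal.mk_le_aleph0_iff, hα]
    exact Cardinal.aleph0_lt_continuum.not_ge
  obtain ⟨a, ha⟩ := (ne_univ_iff_exists_notMem _).1 fun h =>
    huncount (countable_univ_iff.1 (h ▸ hcount))
  obtain ⟨_, ⟨n, rfl⟩, hsub⟩ := hω.2 {.inr (.inl a)} (finite_singleton _)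
  exact ha (mem_iUnion.2 ⟨n, inter_fiber_nonempty_of_mem_st (hsub rfl)⟩)
end

section
/- Let X = [0,ω₁) with the order topology and let Y = [0,ω₁] topologized so that each α < ω₁ is isolated and sets containing ω₁ are open iff they have countable complement. Then X × Y is not star-Lindelöf. -/
open Set

/-- The first uncountable ordinal. -/
noncomputable abbrev omega1 : Ordinal := (Cardinal.aleph 1).ord

/-- `X = [0, ω₁)`. -/
abbrev SpaceX := {o : Ordinal // o < omega1}

/-- `Y = [0, ω₁]`. -/
abbrev SpaceY := {o : Ordinal // o ≤ omega1}

/-- The order topology on `X = [0, ω₁)`. -/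
noncomputable def TopX : TopologicalSpace SpaceX := Preorder.topology SpaceX

/-- The topology on `Y = [0, ω₁]` in which every `α < ω₁` is isolated and a set
containing `ω₁` is open iff its complement is countable. -/
def TopY : TopologicalSpace SpaceY where
  IsOpen S := (⟨omega1, le_refl omega1⟩ : SpaceY) ∈ S → Sᶜ.Countable
  isOpen_univ := fun _ => by simp
  isOpen_inter := fun s t hs ht hmem => by
    rw [Set.compl_inter]
    exact (hs hmem.1).union (ht hmem.2)
  isOpen_sUnion := fun 𝒮 h hmem => by
    obtain ⟨t, ht, hxt⟩ := hmem
    exact Set.Countable.mono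
      (Set.compl_subset_compl.2 (Set.subset_sUnion_of_mem ht)) (h t ht hxt)


/-! ### Auxiliary definitions for the witnessing cover -/

universe u v

open Topology

lemma lift_omega1 : Ordinal.lift.{v, u} omega1.{u} = omega1.{max u v} := by
  rw [Cardinal.lift_ord, Cardinal.lift_aleph, Ordinal.lift_one]

lemma omega1_isLimit : Order.IsSuccLimit omega1.{u} :=
  Cardinal.isSuccLimit_ord Cardinal.aleph0_lt_aleph_one.le

lemma succ_lt_omega1 {a : Ordinal.{u}} (h : a < omega1.{u}) : a + 1 < omega1 := by
  rw [Ordinal.add_one_eq_succ]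
  exact omega1_isLimit.succ_lt h

lemma exists_mirror {α : Ordinal.{u}} (h : α < omega1.{u}) :
    ∃ b : Ordinal.{v}, b < omega1.{v} ∧ Ordinal.lift.{u} b = Ordinal.lift.{v} α := by
  have h1 : Ordinal.lift.{v} α < Ordinal.lift.{u} omega1.{v} := by
    rw [lift_omega1, ← lift_omega1.{u,v}]
    exact Ordinal.lift_lt.2 h
  obtain ⟨b, hb1, hb2⟩ := Ordinal.lt_lift_iff.1 h1
  exact ⟨b, hb1, hb2⟩

lemma lift_lt_lift_omega1 (α : SpaceX.{u}) :
    Ordinal.lift.{v} α.1 < Ordinal.lift.{u} omega1.{v} := by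
  rw [lift_omega1, ← lift_omega1.{u, v}]
  exact Ordinal.lift_lt.2 α.2

lemma le_lift_of_eq_omega1 {y : SpaceY.{v}} (hy : y.1 = omega1.{v}) (α : SpaceX.{u}) :
    Ordinal.lift.{v} α.1 ≤ Ordinal.lift.{u} y.1 := by
  rw [hy]
  exact (lift_lt_lift_omega1 α).le

lemma mirror_exists (α : SpaceX.{u}) :
    ∃ yα : SpaceY.{v}, Ordinal.lift.{u} yα.1 = Ordinal.lift.{v} α.1 := by
  obtain ⟨b, hb1, hb2⟩ := exists_mirror α.2
  exact ⟨⟨b, hb1.le⟩, hb2⟩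

/-- `U1 α = [0,α] × [α,ω₁]`. -/
def CovU1 (α : SpaceX.{u}) : Set (SpaceX.{u} × SpaceY.{v}) :=
  {x : SpaceX.{u} | x.1 ≤ α.1} ×ˢ
    {y : SpaceY.{v} | Ordinal.lift.{v} α.1 ≤ Ordinal.lift.{u} y.1}

/-- `U2 α = (α,ω₁) × {α}`. -/
def CovU2 (α : SpaceX.{u}) : Set (SpaceX.{u} × SpaceY.{v}) :=
  {x : SpaceX.{u} | α.1 < x.1} ×ˢ
    {y : SpaceY.{v} | Ordinal.lift.{u} y.1 = Ordinal.lift.{v} α.1}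

/-- Countability of initial segments below `ω₁` in `Y`. -/
lemma countable_initialSeg (α : Ordinal.{v}) (hα : α < omega1.{v}) :
    Set.Countable {y : SpaceY.{v} | y.1 < α} := by
  have hcard : α.card ≤ Cardinal.aleph0 := by
    have := Cardinal.lt_ord.1 hα
    rwa [← Cardinal.succ_aleph0, Order.lt_succ_iff] at this
  have h1 : Set.Countable (Set.Iio α) := by
    rw [← Set.countable_coe_iff, ← Cardinal.mk_le_aleph0_iff, Ordinal.mk_Iio_ordinal,
      ← Cardinal.lift_aleph0.{v + 1, v}]
    exact Cardinal.lift_le.2 hcard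
  have h2 : {y : SpaceY.{v} | y.1 < α} = (Subtype.val) ⁻¹' (Set.Iio α) := rfl
  rw [h2]
  exact h1.preimage Subtype.val_injective

lemma isOpen_U1 (α : SpaceX.{u}) :
    IsOpen[@instTopologicalSpaceProd _ _ TopX.{u} TopY.{v}] (CovU1.{u, v} α) := by
  letI := TopX.{u}
  letI := TopY.{v}
  haveI : OrderTopology SpaceX.{u} := ⟨rfl⟩
  apply IsOpen.prod
  · have hs : α.1 + 1 < omega1.{u} := succ_lt_omega1 α.2
    have h0 : {x : SpaceX.{u} | x.1 ≤ α.1} = Set.Iio (⟨α.1 + 1, hs⟩ : SpaceX.{u}) := by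
      ext x
      simp only [Set.mem_setOf_eq, Set.mem_Iio, ← Subtype.coe_lt_coe,
        Ordinal.add_one_eq_succ, Order.lt_succ_iff]
    rw [h0]
    exact isOpen_Iio
  · intro hmem
    obtain ⟨b, hb1, hb2⟩ := exists_mirror.{u, v} α.2
    have h0 : {y : SpaceY.{v} | Ordinal.lift.{v} α.1 ≤ Ordinal.lift.{u} y.1}ᶜ
        = {y : SpaceY.{v} | y.1 < b} := by
      ext y
      simp only [Set.mem_compl_iff, Set.mem_setOf_eq, not_le, ← hb2, Ordinal.lift_lt]
    rw [h0]
    exact countable_initialSeg b hb1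

lemma isOpen_U2 (α : SpaceX.{u}) :
    IsOpen[@instTopologicalSpaceProd _ _ TopX.{u} TopY.{v}] (CovU2.{u, v} α) := by
  letI := TopX.{u}
  letI := TopY.{v}
  haveI : OrderTopology SpaceX.{u} := ⟨rfl⟩
  apply IsOpen.prod
  · exact isOpen_Ioi (a := α)
  · intro hmem
    have h1 : Ordinal.lift.{u} omega1.{v} = Ordinal.lift.{v} α.1 := hmem
    have h2 : Ordinal.lift.{v} α.1 < Ordinal.lift.{u} omega1.{v} := by
      rw [lift_omega1, ← lift_omega1.{u, v}]
      exact Ordinal.lift_lt.2 α.2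
    exact absurd h1 (ne_of_gt h2)

lemma key :
    ¬ @StarLindelof (SpaceX.{u} × SpaceY.{v})
      (@instTopologicalSpaceProd _ _ TopX.{u} TopY.{v}) := by
  intro hSL
  set U : Set (Set (SpaceX.{u} × SpaceY.{v})) := Set.range CovU1.{u,v} ∪ Set.range CovU2.{u,v} with hU
  have hcover : @IsOpenCover _ (@instTopologicalSpaceProd _ _ TopX TopY) U := by
    constructor
    · rintro W (⟨α, rfl⟩ | ⟨α, rfl⟩)
      · exact isOpen_U1 α
      · exact isOpen_U2 α
    · ext ⟨x, y⟩
      simp only [Set.mem_sUnion, Set.mem_univ, iff_true]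
      rcases lt_or_eq_of_le y.2 with hy | hy
      · obtain ⟨γ', hγ1, hγ2⟩ := exists_mirror hy
        rcases le_or_gt x.1 γ' with hxy | hxy
        · exact ⟨CovU1 ⟨γ', hγ1⟩, Or.inl ⟨_, rfl⟩, Set.mem_prod.2 ⟨hxy, hγ2.le⟩⟩
        · exact ⟨CovU2 ⟨γ', hγ1⟩, Or.inr ⟨_, rfl⟩, Set.mem_prod.2 ⟨hxy, hγ2.symm⟩⟩
      · refine ⟨CovU1 x, Or.inl ⟨_, rfl⟩, Set.mem_prod.2 ⟨?_, ?_⟩⟩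
        · exact le_refl x.1
        · exact le_lift_of_eq_omega1 hy x
  obtain ⟨V, hVU, hVc, hVst⟩ := hSL U hcover
  have hidx : ∀ W ∈ V, ∃ α : SpaceX.{u}, W = CovU1.{u,v} α ∨ W = CovU2.{u,v} α := by
    intro W hW
    rcases hVU hW with (⟨α, rfl⟩ | ⟨α, rfl⟩)
    · exact ⟨α, Or.inl rfl⟩
    · exact ⟨α, Or.inr rfl⟩
  -- the "mirror" point of each α in Y
  choose mir hmir' using fun α : SpaceX.{u} => mirror_exists.{u,v} α
  -- indices are unique
  have huniq : ∀ α α' : SpaceX.{u},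
      ((CovU1.{u,v} α = CovU1.{u,v} α' ∨ CovU1.{u,v} α = CovU2.{u,v} α') ∨
       (CovU2.{u,v} α = CovU1.{u,v} α' ∨ CovU2.{u,v} α = CovU2.{u,v} α')) → α = α' := by
    intro α α' hcase
    have hsucc : α.1 < α.1 + 1 := by
      rw [Ordinal.add_one_eq_succ]; exact Order.lt_succ _
    rcases hcase with (e | e) | (e | e)
    · have hp : (α, mir α) ∈ CovU1.{u,v} α := Set.mem_prod.2 ⟨le_refl α.1, (hmir' α).ge⟩
      rw [e] at hp
      have h1 : α.1 ≤ α'.1 := hp.1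
      have h2 : α'.1 ≤ α.1 := by
        have h2' : Ordinal.lift.{v} α'.1 ≤ Ordinal.lift.{u} (mir α).1 := hp.2
        rw [hmir' α] at h2'
        exact Ordinal.lift_le.1 h2'
      exact Subtype.ext (le_antisymm h1 h2)
    · exfalso
      have hp : ((α, ⟨omega1, le_refl _⟩) : SpaceX.{u} × SpaceY.{v}) ∈ CovU1.{u,v} α :=
        Set.mem_prod.2 ⟨le_refl α.1, le_lift_of_eq_omega1 rfl α⟩
      rw [e] at hp
      exact absurd hp.2 (ne_of_gt (lift_lt_lift_omega1 α'))
    · exfalso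
      have hp : ((⟨α.1 + 1, succ_lt_omega1 α.2⟩, mir α) : SpaceX.{u} × SpaceY.{v}) ∈ CovU2.{u,v} α :=
        Set.mem_prod.2 ⟨hsucc, hmir' α⟩
      rw [e] at hp
      have h1 : α.1 + 1 ≤ α'.1 := hp.1
      have h2 : α'.1 ≤ α.1 := by
        have h2' : Ordinal.lift.{v} α'.1 ≤ Ordinal.lift.{u} (mir α).1 := hp.2
        rw [hmir' α] at h2'
        exact Ordinal.lift_le.1 h2'
      have := (h1.trans h2).trans_lt hsucc
      exact lt_irrefl _ this
    · have hp : ((⟨α.1 + 1, succ_lt_omega1 α.2⟩, mir α) : SpaceX.{u} × SpaceY.{v}) ∈ CovU2.{u,v} α :=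
        Set.mem_prod.2 ⟨hsucc, hmir' α⟩
      rw [e] at hp
      have h1 : Ordinal.lift.{u} (mir α).1 = Ordinal.lift.{v} α'.1 := hp.2
      rw [hmir' α] at h1
      exact Subtype.ext (Ordinal.lift_inj.1 h1)
  -- Find `β < ω₁` strictly above all indices of members of `V`.
  obtain ⟨β, hβ1, hβ⟩ :
      ∃ β : Ordinal, β < omega1 ∧
        ∀ W ∈ V, ∀ α : SpaceX.{u}, (W = CovU1.{u,v} α ∨ W = CovU2.{u,v} α) → α.1 < β := by
    rcases V.eq_empty_or_nonempty with h0 | h0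
    · exact ⟨0, omega1_isLimit.pos, by simp [h0]⟩
    obtain ⟨g, hg⟩ := hVc.exists_eq_range h0
    choose f hf using fun n => hidx (g n) (hg ▸ Set.mem_range_self n)
    have hslt : (⨆ n, (f n).1) < omega1 :=
      by
        have := Ordinal.iSup_lt_omega_one (f := fun n => (f n).1)
          (fun n => by rw [← Cardinal.ord_aleph]; exact (f n).2)
        rwa [← Cardinal.ord_aleph] at this
    refine ⟨(⨆ n, (f n).1) + 1, succ_lt_omega1 hslt, ?_⟩
    intro W hW α hα
    obtain ⟨n, rfl⟩ : ∃ n, g n = W := by rw [hg] at hW; exact hW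
    have hαf : α = f n := by
      apply huniq
      rcases hα with h | h <;> rcases hf n with h' | h'
      · exact Or.inl (Or.inl (h ▸ h'))
      · exact Or.inl (Or.inr (h ▸ h'))
      · exact Or.inr (Or.inl (h ▸ h'))
      · exact Or.inr (Or.inr (h ▸ h'))
    rw [hαf]
    calc (f n).1 ≤ ⨆ n, (f n).1 := Ordinal.le_iSup (fun n => (f n).1) n
    _ < (⨆ n, (f n).1) + 1 := by
        rw [Ordinal.add_one_eq_succ]; exact Order.lt_succ _
  -- The point `(β+1, mirror β)` is not in the star.
  set βX : SpaceX.{u} := ⟨β, hβ1⟩ with hβX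
  set p : SpaceX.{u} × SpaceY.{v} := (⟨β + 1, succ_lt_omega1 hβ1⟩, mir βX) with hp
  have hpmem : p ∈ st (⋃₀ V) U := hVst ▸ Set.mem_univ p
  obtain ⟨B, ⟨hBU, a, haA, haB⟩, hpB⟩ := hpmem
  have hsuccβ : ¬ (β + 1 ≤ β) := by
    rw [Ordinal.add_one_eq_succ]
    exact not_le.2 (Order.lt_succ _)
  rcases hBU with (⟨γ, rfl⟩ | ⟨γ, rfl⟩)
  · -- p ∈ CovU1 γ : β+1 ≤ γ ≤ β, contradiction
    have h1 : β + 1 ≤ γ.1 := hpB.1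
    have h2 : γ.1 ≤ β := by
      have h2' : Ordinal.lift.{v} γ.1 ≤ Ordinal.lift.{u} (mir βX).1 := hpB.2
      rw [hmir' βX] at h2'
      exact Ordinal.lift_le.1 h2'
    exact hsuccβ (h1.trans h2)
  · -- p ∈ CovU2 γ : γ = β, then A ∩ CovU2 γ is empty
    have hγβ : γ.1 = β := by
      have h2' : Ordinal.lift.{u} (mir βX).1 = Ordinal.lift.{v} γ.1 := hpB.2
      rw [hmir' βX] at h2'
      exact (Ordinal.lift_inj.1 h2').symm
    obtain ⟨W, hWV, haW⟩ := haA
    obtain ⟨α, hα⟩ := hidx W hWV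
    have hαβ : α.1 < β := hβ W hWV α hα
    rcases hα with rfl | rfl
    · have h1 : a.1.1 ≤ α.1 := haW.1
      have h2 : γ.1 < a.1.1 := haB.1
      rw [hγβ] at h2
      exact absurd (h1.trans_lt hαβ) (not_lt.2 h2.le)
    · have h4 : Ordinal.lift.{u} a.2.1 = Ordinal.lift.{v} γ.1 := haB.2
      have h5 : Ordinal.lift.{u} a.2.1 = Ordinal.lift.{v} α.1 := haW.2
      have : α.1 = γ.1 := Ordinal.lift_inj.1 (h5.symm.trans h4)
      rw [hγβ] at this
      exact absurd this (ne_of_lt hαβ)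


/-- `[0, ω₁) × [0, ω₁]` (with the topologies above) is not star-Lindelöf. -/
theorem prod_not_starLindelof :
    ¬ @StarLindelof (SpaceX × SpaceY) (@instTopologicalSpaceProd _ _ TopX TopY) :=
  key
end

section
/- For a paracompact space X: if player ONE has a winning strategy in the game G^{ufin}(O,Ω) (the Scheepers game), then ONE has a winning strategy in the star-K-Scheepers game SSG_K(O,Ω); and if TWO has a winning strategy in SSG_K(O,Ω), then TWO has a winning strategy in G^{ufin}(O,Ω). -/
open Set

/-- `σ` is a winning strategy for ONE in the Scheepers game `G^{ufin}(O,Ω)`: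
ONE's moves (open covers) are given by `σ` applied to the list of TWO's previous
moves (finite subfamilies), and no legal play of TWO defeats it. -/
def OneWinsGufin (X : Type*) [TopologicalSpace X]
    (σ : List (Set (Set X)) → Set (Set X)) : Prop :=
  (∀ hist, IsOpenCover (σ hist)) ∧
  ∀ V : ℕ → Set (Set X),
    (∀ n, (V n).Finite ∧ V n ⊆ σ (List.ofFn fun i : Fin n => V i)) →
    ¬ (IsOmegaCover {S | ∃ n, S = ⋃₀ (V n)} ∨ ∃ n, ⋃₀ (V n) = Set.univ)

/-- `τ` is a winning strategy for TWO in `G^{ufin}(O,Ω)`: against any sequence of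
open covers played by ONE, TWO's responses (finite subfamilies of the current cover)
given by `τ` applied to ONE's moves so far win the play. -/
def TwoWinsGufin (X : Type*) [TopologicalSpace X]
    (τ : List (Set (Set X)) → Set (Set X)) : Prop :=
  ∀ U : ℕ → Set (Set X), (∀ n, IsOpenCover (U n)) →
    (∀ n, (τ (List.ofFn fun i : Fin (n + 1) => U i)).Finite ∧
      τ (List.ofFn fun i : Fin (n + 1) => U i) ⊆ U n) ∧
    (IsOmegaCover {S | ∃ n, S = ⋃₀ τ (List.ofFn fun i : Fin (n + 1) => U i)} ∨
      ∃ n, ⋃₀ τ (List.ofFn fun i : Fin (n + 1) => U i) = Set.univ)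

/-- `σ` is a winning strategy for ONE in the star-K-Scheepers game `SSG_K(O,Ω)`:
ONE's moves (open covers) are given by `σ` applied to TWO's previous moves
(compact sets), and no legal play of TWO defeats it. -/
def OneWinsSSGK (X : Type*) [TopologicalSpace X]
    (σ : List (Set X) → Set (Set X)) : Prop :=
  (∀ hist, IsOpenCover (σ hist)) ∧
  ∀ K : ℕ → Set X, (∀ n, IsCompact (K n)) →
    ¬ IsOmegaCover {S | ∃ n, S = st (K n) (σ (List.ofFn fun i : Fin n => K i))}

/-- `τ` is a winning strategy for TWO in `SSG_K(O,Ω)`: against any sequence of open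
covers played by ONE, TWO's responses (compact sets) given by `τ` applied to ONE's
moves so far yield stars forming an ω-cover. -/
def TwoWinsSSGK (X : Type*) [TopologicalSpace X]
    (τ : List (Set (Set X)) → Set X) : Prop :=
  ∀ U : ℕ → Set (Set X), (∀ n, IsOpenCover (U n)) →
    (∀ n, IsCompact (τ (List.ofFn fun i : Fin (n + 1) => U i))) ∧
    IsOmegaCover {S | ∃ n, S = st (τ (List.ofFn fun i : Fin (n + 1) => U i)) (U n)}

section Aux
variable {X : Type*} [TopologicalSpace X]

lemma exists_good_refinement [ParacompactSpace X]
    {U : Set (Set X)} (hU : IsOpenCover U) :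
    ∃ R : Set (Set X), IsOpenCover R ∧ (∀ B ∈ R, ∃ A ∈ U, B ⊆ A) ∧
      ∀ K : Set X, IsCompact K → {B | B ∈ R ∧ (K ∩ B).Nonempty}.Finite := by
  obtain ⟨v, hvo, hvc, hvlf, hvsub⟩ :=
    precise_refinement (fun A : U => (A : Set X)) (fun A => hU.1 A A.2)
      (by rw [← sUnion_eq_iUnion]; exact hU.2)
  refine ⟨Set.range v, ⟨?_, ?_⟩, ?_, ?_⟩
  · rintro B ⟨a, rfl⟩; exact hvo a
  · rw [sUnion_range]; exact hvc
  · rintro B ⟨a, rfl⟩; exact ⟨a, a.2, hvsub a⟩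
  · intro K hK
    have h1 : {a | (v a ∩ K).Nonempty}.Finite := hvlf.finite_nonempty_inter_compact hK
    apply (h1.image v).subset
    rintro B ⟨⟨a, rfl⟩, hB⟩
    exact ⟨a, by rwa [inter_comm] at hB, rfl⟩

open scoped Classical in
noncomputable def myRef [ParacompactSpace X] (U : Set (Set X)) : Set (Set X) :=
  if h : IsOpenCover U then (exists_good_refinement h).choose else {Set.univ}

lemma isOpenCover_myRef [ParacompactSpace X] (U : Set (Set X)) : IsOpenCover (myRef U) := by
  rw [myRef]
  split
  · exact (exists_good_refinement ‹_›).choose_spec.1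
  · constructor
    · intro V hV
      rw [mem_singleton_iff] at hV
      subst hV; exact isOpen_univ
    · simp

lemma st_myRef_subset [ParacompactSpace X] {U : Set (Set X)} {K : Set X}
    (hU : IsOpenCover U) (hK : IsCompact K) :
    ∃ V : Set (Set X), V.Finite ∧ V ⊆ U ∧ st K (myRef U) ⊆ ⋃₀ V := by
  have hR := exists_good_refinement hU
  rw [myRef, dif_pos hU]
  obtain ⟨-, href, hfin⟩ := hR.choose_spec
  set R := hR.choose with hRdef
  have hs : {B | B ∈ R ∧ (K ∩ B).Nonempty}.Finite := hfin K hK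
  choose! A hA hBA using href
  refine ⟨A '' {B | B ∈ R ∧ (K ∩ B).Nonempty}, hs.image A, ?_, ?_⟩
  · rintro _ ⟨B, hB, rfl⟩; exact hA B hB.1
  · intro x hx
    obtain ⟨B, hB, hxB⟩ := hx
    exact ⟨A B, ⟨B, hB, rfl⟩, hBA B hB.1 hxB⟩

open scoped Classical in
noncomputable def finSub [ParacompactSpace X] (U : Set (Set X)) (K : Set X) : Set (Set X) :=
  if h : IsOpenCover U ∧ IsCompact K then (st_myRef_subset h.1 h.2).choose else ∅

lemma finSub_spec [ParacompactSpace X] {U : Set (Set X)} {K : Set X}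
    (hU : IsOpenCover U) (hK : IsCompact K) :
    (finSub U K).Finite ∧ finSub U K ⊆ U ∧ st K (myRef U) ⊆ ⋃₀ finSub U K := by
  rw [finSub, dif_pos (⟨hU, hK⟩ : IsOpenCover U ∧ IsCompact K)]
  exact (st_myRef_subset hU hK).choose_spec

lemma omega_mono {s t : ℕ → Set X}
    (h : IsOmegaCover {S | ∃ n, S = s n}) (hsub : ∀ n, s n ⊆ t n)
    (hop : ∀ n, IsOpen (t n)) : IsOmegaCover {S | ∃ n, S = t n} := by
  refine ⟨⟨?_, ?_⟩, ?_⟩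
  · rintro V ⟨n, rfl⟩; exact hop n
  · apply eq_univ_of_univ_subset
    rw [← h.1.2]
    rintro x ⟨S, ⟨n, rfl⟩, hxS⟩
    exact ⟨t n, ⟨n, rfl⟩, hsub n hxS⟩
  · intro F hF
    obtain ⟨V, ⟨n, rfl⟩, hFV⟩ := h.2 F hF
    exact ⟨t n, ⟨n, rfl⟩, hFV.trans (hsub n)⟩

noncomputable def gAux [ParacompactSpace X] (σ : List (Set (Set X)) → Set (Set X)) :
    List (Set (Set X)) → List (Set X) → List (Set (Set X))
  | acc, [] => acc
  | acc, k :: ks => gAux σ (acc ++ [finSub (σ acc) k]) ks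

lemma gAux_concat [ParacompactSpace X] (σ : List (Set (Set X)) → Set (Set X))
    (l : List (Set X)) (k : Set X) : ∀ acc,
    gAux σ acc (l ++ [k]) = gAux σ acc l ++ [finSub (σ (gAux σ acc l)) k] := by
  induction l with
  | nil => intro acc; rfl
  | cons a l ih => intro acc; simp only [List.cons_append, gAux]; exact ih _

end Aux

/-- For a paracompact space, a winning strategy for ONE in `G^{ufin}(O,Ω)` yields one
in `SSG_K(O,Ω)`, and a winning strategy for TWO in `SSG_K(O,Ω)` yields one in
`G^{ufin}(O,Ω)`. -/

theorem gufin_ssgk_strategies {X : Type*} [TopologicalSpace X] [ParacompactSpace X] :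
    ((∃ σ, OneWinsGufin X σ) → ∃ σ, OneWinsSSGK X σ) ∧
    ((∃ τ, TwoWinsSSGK X τ) → ∃ τ, TwoWinsGufin X τ) := by
  constructor
  · rintro ⟨σ, hσ1, hσ2⟩
    refine ⟨fun hist => myRef (σ (gAux σ [] hist)), fun hist => isOpenCover_myRef _, ?_⟩
    intro K hK homega
    set Vh : ℕ → List (Set (Set X)) :=
      fun n => gAux σ [] (List.ofFn fun i : Fin n => K i) with hVhdef
    set V : ℕ → Set (Set X) := fun n => finSub (σ (Vh n)) (K n) with hVdef
    have hVh : ∀ n, Vh n = List.ofFn fun i : Fin n => V i := by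
      intro n
      induction n with
      | zero => simp [hVhdef, gAux]
      | succ n ih =>
        have h1 : (List.ofFn fun i : Fin (n+1) => K i)
            = (List.ofFn fun i : Fin n => K i) ++ [K n] := by
          rw [List.ofFn_succ', List.concat_eq_append]; rfl
        have h2 : (List.ofFn fun i : Fin (n+1) => V i)
            = (List.ofFn fun i : Fin n => V i) ++ [V n] := by
          rw [List.ofFn_succ', List.concat_eq_append]; rfl
        have : Vh (n+1) = Vh n ++ [V n] := by
          rw [hVhdef]
          simp only [h1, gAux_concat]
          rfl
        rw [this, ih, h2]
    have legal : ∀ n, (V n).Finite ∧ V n ⊆ σ (List.ofFn fun i : Fin n => V i) := by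
      intro n
      rw [← hVh n]
      exact ⟨(finSub_spec (hσ1 _) (hK n)).1, (finSub_spec (hσ1 _) (hK n)).2.1⟩
    refine hσ2 V legal (Or.inl ?_)
    refine omega_mono (s := fun n => st (K n) (myRef (σ (Vh n))))
      (t := fun n => ⋃₀ V n) homega ?_ ?_
    · intro n; exact (finSub_spec (hσ1 _) (hK n)).2.2
    · intro n
      exact isOpen_sUnion fun t ht => (hσ1 _).1 t ((finSub_spec (hσ1 _) (hK n)).2.1 ht)
  · rintro ⟨τ, hτ⟩
    refine ⟨fun hist => finSub (hist.getLastD ∅) (τ (hist.map myRef)), ?_⟩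
    intro U hU
    obtain ⟨hKc, homega⟩ := hτ (fun n => myRef (U n)) (fun n => isOpenCover_myRef _)
    have hmap : ∀ n : ℕ, ((List.ofFn fun i : Fin (n+1) => U i).map myRef)
        = List.ofFn fun i : Fin (n+1) => myRef (U i) := by
      intro n; rw [List.map_ofFn]; rfl
    have hlast : ∀ n : ℕ, (List.ofFn fun i : Fin (n+1) => U i).getLastD ∅ = U n := by
      intro n
      rw [List.ofFn_succ', List.concat_eq_append, List.getLastD_concat]
      rfl
    simp only [hmap, hlast]
    constructor
    · intro n
      exact ⟨(finSub_spec (hU n) (hKc n)).1, (finSub_spec (hU n) (hKc n)).2.1⟩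
    · refine Or.inl ?_
      refine omega_mono
        (s := fun n => st (τ (List.ofFn fun i : Fin (n+1) => myRef (U i))) (myRef (U n)))
        (t := fun n => ⋃₀ finSub (U n) (τ (List.ofFn fun i : Fin (n+1) => myRef (U i))))
        homega ?_ ?_
      · intro n; exact (finSub_spec (hU n) (hKc n)).2.2
      · intro n
        exact isOpen_sUnion fun t ht => (hU n).1 t ((finSub_spec (hU n) (hKc n)).2.1 ht)
end
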